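/- arXiv:math/0005143 — 7 statements merged into one kernel-verified Lean document; each statement's English description precedes it below -/
import Mathlib

section
/- Let H be a free abelian group of finite rank and Al(H,α) the twisted group algebra over a field K with alternating bimultiplicative quantization parameter α. Then the set of invertible elements of Al(H,α) is exactly {a·e(h) : a ∈ K*, h ∈ H}. -/
open Finsupp

/-- Twisted group algebra multiplication on `Al(H,α) = H →₀ K`. -/
noncomputable def tmul {K : Type*} [Field K] {H : Type*} [AddCommGroup H]
    (α : H → H → Kˣ) (x y : H →₀ K) : H →₀ K :=
  x.sum fun h a => y.sum fun g b => Finsupp.single (h + g) (a * b * (α h g : K))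

/-- The basis element `e(h)`; `e(0)` is the unit of `Al(H,α)`. -/
noncomputable def eAl {K : Type*} [Field K] {H : Type*} [AddCommGroup H] (h : H) : H →₀ K :=
  Finsupp.single h (1 : K)

/-!
Free abelian groups have the two-unique-sums property: any two finite sets `A`, `B` with
`|A|·|B| > 1` admit two different pairs `(a, b) ∈ A × B` each of which is the only way to write
`a + b` as such a sum (order the group lexicographically through a basis). If `x y = e(0)` and
`x` or `y` had more than one term, the coefficients of `x y` at both of these sums would be
nonzero, so both sums would be `0`, contradicting uniqueness. Conversely `a • e(h)` has inverse
`(a α(h,-h))⁻¹ • e(-h)`, since bimultiplicativity gives `α(h,-h) = α(h,h)⁻¹ = α(-h,h)`.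
-/

section
variable {K : Type*} [Field K] {H : Type*} [AddCommGroup H] (α : H → H → Kˣ)

theorem tmul_eq_sum_product (x y : H →₀ K) :
    tmul α x y = ∑ p ∈ x.support ×ˢ y.support,
      Finsupp.single (p.1 + p.2) (x p.1 * y p.2 * (α p.1 p.2 : K)) := by
  rw [tmul, Finsupp.sum, Finset.sum_product]
  rfl

theorem tmul_zero_left (y : H →₀ K) : tmul α 0 y = 0 := by
  simp [tmul]

theorem tmul_zero_right (x : H →₀ K) : tmul α x 0 = 0 := by
  simp [tmul]

theorem tmul_smul_eAl (a b : K) (h g : H) :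
    tmul α (a • eAl h) (b • eAl g) = (a * b * (α h g : K)) • eAl (h + g) := by
  simp [tmul, eAl, Finsupp.smul_single]

theorem tmul_apply_add_of_uniqueAdd {x y : H →₀ K} {h g : H} (hh : h ∈ x.support)
    (hg : g ∈ y.support) (hu : UniqueAdd x.support y.support h g) :
    tmul α x y (h + g) = x h * y g * (α h g : K) := by
  rw [tmul_eq_sum_product, Finset.sum_apply', Finset.sum_eq_single_of_mem (h, g)
    (Finset.mem_product.2 ⟨hh, hg⟩), Finsupp.single_eq_same]
  rintro ⟨h', g'⟩ hp hne
  obtain ⟨hh', hg'⟩ := Finset.mem_product.1 hp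
  refine Finsupp.single_eq_of_ne fun heq => hne ?_
  obtain ⟨rfl, rfl⟩ := hu hh' hg' heq.symm
  rfl

theorem add_eq_zero_of_uniqueAdd_of_tmul_eq_eAl_zero {x y : H →₀ K} (hxy : tmul α x y = eAl 0)
    {h g : H} (hh : h ∈ x.support) (hg : g ∈ y.support)
    (hu : UniqueAdd x.support y.support h g) : h + g = 0 := by
  by_contra hne
  have hcoeff := tmul_apply_add_of_uniqueAdd α hh hg hu
  rw [hxy, eAl, Finsupp.single_eq_of_ne hne] at hcoeff
  exact mul_ne_zero (mul_ne_zero (mem_support_iff.1 hh) (mem_support_iff.1 hg))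
    (α h g).ne_zero hcoeff.symm

theorem exists_eq_smul_eAl_of_tmul_eq_eAl_zero [TwoUniqueSums H] {x y : H →₀ K}
    (hxy : tmul α x y = eAl 0) : ∃ (a : Kˣ) (h : H), x = (a : K) • eAl h := by
  have hx : x ≠ 0 := by
    rintro rfl
    rw [tmul_zero_left, eAl] at hxy
    exact one_ne_zero (single_eq_zero.1 hxy.symm)
  have hy : y ≠ 0 := by
    rintro rfl
    rw [tmul_zero_right, eAl] at hxy
    exact one_ne_zero (single_eq_zero.1 hxy.symm)
  have hcard : x.support.card * y.support.card ≤ 1 := by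
    by_contra! hlt
    obtain ⟨p, hp, q, hq, hpq, hpu, hqu⟩ := TwoUniqueSums.uniqueAdd_of_one_lt_card hlt
    obtain ⟨hp₁, hp₂⟩ := Finset.mem_product.1 hp
    obtain ⟨hq₁, hq₂⟩ := Finset.mem_product.1 hq
    have hsum : q.1 + q.2 = p.1 + p.2 := by
      rw [add_eq_zero_of_uniqueAdd_of_tmul_eq_eAl_zero α hxy hp₁ hp₂ hpu,
        add_eq_zero_of_uniqueAdd_of_tmul_eq_eAl_zero α hxy hq₁ hq₂ hqu]
    exact hpq (Prod.ext_iff.2 (hpu hq₁ hq₂ hsum)).symm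
  have hx1 : x.support.card = 1 :=
    le_antisymm ((Nat.le_mul_of_pos_right _ (Finset.card_pos.2 (support_nonempty_iff.2 hy))).trans
      hcard) (Finset.card_pos.2 (support_nonempty_iff.2 hx))
  obtain ⟨h, hsupp⟩ := Finset.card_eq_one.1 hx1
  obtain ⟨hne, hxh⟩ := support_eq_singleton.1 hsupp
  refine ⟨Units.mk0 _ hne, h, ?_⟩
  rwa [Units.val_mk0, eAl, smul_single, smul_eq_mul, mul_one]

theorem alpha_self_neg_eq_neg_self
    (hbil₁ : ∀ h₁ h₂ g, α (h₁ + h₂) g = α h₁ g * α h₂ g)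
    (hbil₂ : ∀ h g₁ g₂, α h (g₁ + g₂) = α h g₁ * α h g₂) (h : H) :
    α h (-h) = α (-h) h := by
  have hright : α h 0 = 1 := by simpa using hbil₂ h 0 0
  have hleft : α 0 h = 1 := by simpa using hbil₁ 0 0 h
  have h₁ : α h (-h) * α h h = 1 := by rw [← hbil₂, neg_add_cancel, hright]
  have h₂ : α (-h) h * α h h = 1 := by rw [← hbil₁, neg_add_cancel, hleft]
  exact mul_right_cancel (h₁.trans h₂.symm)

end

theorem twoUniqueSums_of_free_int (H : Type*) [AddCommGroup H] [Module.Free ℤ H] :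
    TwoUniqueSums H :=
  ((Module.Free.chooseBasis ℤ H).repr.toAddEquiv.twoUniqueSums_iff).2 inferInstance

theorem stmt2_general {K : Type*} [Field K] {H : Type*} [AddCommGroup H]
    [Module.Free ℤ H]
    (α : H → H → Kˣ)
    (hbil₁ : ∀ h₁ h₂ g, α (h₁ + h₂) g = α h₁ g * α h₂ g)
    (hbil₂ : ∀ h g₁ g₂, α h (g₁ + g₂) = α h g₁ * α h g₂) :
    {x : H →₀ K | ∃ y : H →₀ K, tmul α x y = eAl 0 ∧ tmul α y x = eAl 0} =
    {x : H →₀ K | ∃ (a : Kˣ) (h : H), x = (a : K) • eAl h} := by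
  have := twoUniqueSums_of_free_int H
  ext x
  constructor
  · rintro ⟨y, hxy, -⟩
    exact exists_eq_smul_eAl_of_tmul_eq_eAl_zero α hxy
  · rintro ⟨a, h, rfl⟩
    refine ⟨(((a * α h (-h))⁻¹ : Kˣ) : K) • eAl (-h), ?_, ?_⟩
    · rw [tmul_smul_eAl, add_neg_cancel, ← Units.val_mul]
      simp
    · rw [tmul_smul_eAl, neg_add_cancel, ← alpha_self_neg_eq_neg_self α hbil₁ hbil₂]
      simp

/-- for `H` free abelian of finite rank, the invertible elements of
`Al(H,α)` are exactly the nonzero scalar multiples of basis elements `a·e(h)`. -/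
theorem stmt2 {K : Type*} [Field K] {H : Type*} [AddCommGroup H]
    [Module.Free ℤ H] [Module.Finite ℤ H]
    (α : H → H → Kˣ)
    (halt : ∀ h g, α h g * α g h = 1)
    (hbil₁ : ∀ h₁ h₂ g, α (h₁ + h₂) g = α h₁ g * α h₂ g)
    (hbil₂ : ∀ h g₁ g₂, α h (g₁ + g₂) = α h g₁ * α h g₂) :
    {x : H →₀ K | ∃ y : H →₀ K, tmul α x y = eAl 0 ∧ tmul α y x = eAl 0} =
    {x : H →₀ K | ∃ (a : Kˣ) (h : H), x = (a : K) • eAl h} :=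
  stmt2_general α hbil₁ hbil₂
end

section
/- Let F* : Al(H₁,α₁) → Al(H₂,α₂) be a K-algebra homomorphism between twisted group algebras such that F*(e(h)) = a_h·e(f(h)) with a_h ∈ K* and f : H₁ → H₂ a function. Then f is a group homomorphism, and for all h, g ∈ H₁ one has α₂(f(h),f(g))² = α₁(h,g)², with the form ε_f(h,g) := α₁(h,g)·α₂(f(h),f(g))⁻¹ taking values in {±1}. -/
open Finsupp

lemma tmul_single {K : Type*} [Field K] {H : Type*} [AddCommGroup H]
    (α : H → H → Kˣ) (h g : H) (c d : K) :
    tmul α (Finsupp.single h c) (Finsupp.single g d)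
      = Finsupp.single (h + g) (c * d * (α h g : K)) := by
  unfold tmul
  rw [Finsupp.sum_single_index, Finsupp.sum_single_index] <;> simp

/-- if a K-algebra homomorphism `F* : Al(H₁,α₁) → Al(H₂,α₂)` sends
`e(h)` to `a_h·e(f(h))` with `a_h ∈ Kˣ`, then `f` is a group homomorphism,
`α₂(f h, f g)² = α₁(h,g)²`, and `ε_f(h,g) = α₁(h,g)·α₂(f h, f g)⁻¹ ∈ {±1}`. -/
theorem stmt3 {K : Type*} [Field K] {H₁ H₂ : Type*} [AddCommGroup H₁] [AddCommGroup H₂]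
    (α₁ : H₁ → H₁ → Kˣ) (α₂ : H₂ → H₂ → Kˣ)
    (halt₁ : ∀ h g, α₁ h g * α₁ g h = 1)
    (hbil₁ : ∀ h₁ h₂ g, α₁ (h₁ + h₂) g = α₁ h₁ g * α₁ h₂ g)
    (halt₂ : ∀ h g, α₂ h g * α₂ g h = 1)
    (hbil₂ : ∀ h₁ h₂ g, α₂ (h₁ + h₂) g = α₂ h₁ g * α₂ h₂ g)
    (F : (H₁ →₀ K) →ₗ[K] (H₂ →₀ K))
    (hFmul : ∀ x y, F (tmul α₁ x y) = tmul α₂ (F x) (F y))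
    (f : H₁ → H₂) (a : H₁ → Kˣ)
    (hFe : ∀ h : H₁, F (eAl h) = (a h : K) • eAl (f h)) :
    (∀ h g : H₁, f (h + g) = f h + f g) ∧
    (∀ h g : H₁, (α₂ (f h) (f g)) ^ 2 = (α₁ h g) ^ 2) ∧
    (∀ h g : H₁, (α₁ h g * (α₂ (f h) (f g))⁻¹ : Kˣ) = 1 ∨
      (α₁ h g * (α₂ (f h) (f g))⁻¹ : Kˣ) = -1) := by
  have key : ∀ h g : H₁, f (h + g) = f h + f g ∧
      (α₁ h g : K) * a (h + g) = a h * a g * α₂ (f h) (f g) := by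
    intro h g
    have h1 := hFmul (eAl h) (eAl g)
    rw [hFe, hFe] at h1
    have e1 : tmul α₁ (eAl h) (eAl g) = Finsupp.single (h + g) ((α₁ h g : K)) := by
      simpa [eAl] using tmul_single α₁ h g (1 : K) (1 : K)
    have e2 : ((a h : K) • eAl (f h) : H₂ →₀ K) = Finsupp.single (f h) ((a h : K)) := by
      simp [eAl]
    have e3 : ((a g : K) • eAl (f g) : H₂ →₀ K) = Finsupp.single (f g) ((a g : K)) := by
      simp [eAl]
    rw [e1, e2, e3, tmul_single] at h1
    have e4 : (Finsupp.single (h + g) ((α₁ h g : K)) : H₁ →₀ K)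
        = (α₁ h g : K) • eAl (h + g) := by simp [eAl]
    rw [e4, map_smul, hFe, smul_smul] at h1
    have e5 : ((α₁ h g : K) * (a (h + g) : K)) • eAl (f (h + g))
        = Finsupp.single (f (h + g)) ((α₁ h g : K) * (a (h + g) : K)) := by simp [eAl]
    rw [e5, Finsupp.single_eq_single_iff] at h1
    rcases h1 with ⟨h1, h2⟩ | ⟨h1, h2⟩
    · exact ⟨h1, h2⟩
    · exact absurd h1 (mul_ne_zero (Units.ne_zero _) (Units.ne_zero _))
  have sqK : ∀ h g : H₁, ((α₂ (f h) (f g) : K)) ^ 2 = ((α₁ h g : K)) ^ 2 := by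
    intro h g
    have s1 := (key h g).2
    have s2 := (key g h).2
    rw [add_comm g h] at s2
    have hxy : (α₁ h g : K) * (α₁ g h : K) = 1 := by
      rw [← Units.val_mul, halt₁ h g, Units.val_one]
    have huv : (α₂ (f h) (f g) : K) * (α₂ (f g) (f h) : K) = 1 := by
      rw [← Units.val_mul, halt₂ (f h) (f g), Units.val_one]
    have hA : (a (h + g) : K) ≠ 0 := Units.ne_zero _
    have e3 : (α₁ h g : K) * (α₂ (f g) (f h) : K)
        = (α₁ g h : K) * (α₂ (f h) (f g) : K) := by
      have h5 : (a (h + g) : K) * ((α₁ h g : K) * (α₂ (f g) (f h) : K))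
          = (a (h + g) : K) * ((α₁ g h : K) * (α₂ (f h) (f g) : K)) := by
        linear_combination (α₂ (f g) (f h) : K) * s1 - (α₂ (f h) (f g) : K) * s2
      exact mul_left_cancel₀ hA h5
    set x := (α₁ h g : K); set y := (α₁ g h : K)
    set u := (α₂ (f h) (f g) : K); set v := (α₂ (f g) (f h) : K)
    calc u ^ 2 = u ^ 2 * (x * y) := by rw [hxy, mul_one]
      _ = (x * u) * (y * u) := by ring
      _ = (x * u) * (x * v) := by rw [← e3]
      _ = x ^ 2 * (u * v) := by ring
      _ = x ^ 2 := by rw [huv, mul_one]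
  refine ⟨fun h g => (key h g).1, ?_, ?_⟩
  · intro h g
    exact Units.ext (by push_cast; exact sqK h g)
  · intro h g
    have hu : (α₂ (f h) (f g) : K) ≠ 0 := Units.ne_zero _
    have hε : ((α₁ h g * (α₂ (f h) (f g))⁻¹ : Kˣ) : K)
        = (α₁ h g : K) * ((α₂ (f h) (f g) : K))⁻¹ := by push_cast; ring
    have hsq : (((α₁ h g * (α₂ (f h) (f g))⁻¹ : Kˣ) : K)) ^ 2 = 1 := by
      rw [hε]
      field_simp
      exact (sqK h g).symm
    have hfac : (((α₁ h g * (α₂ (f h) (f g))⁻¹ : Kˣ) : K) - 1)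
        * (((α₁ h g * (α₂ (f h) (f g))⁻¹ : Kˣ) : K) + 1) = 0 := by
      linear_combination hsq
    rcases mul_eq_zero.mp hfac with h0 | h0
    · left; exact Units.ext (by rw [sub_eq_zero] at h0; simpa using h0)
    · right; exact Units.ext (by rw [add_eq_zero_iff_eq_neg] at h0; simpa using h0)
end

section
/- Let L = (h_l, h_r, ψ, (·,·)) be a theta multiplier for (H, α, B), i.e. h_l, h_r : B → H and ψ : B → K* are group homomorphisms, (·,·) : B × B → K* is symmetric bimultiplicative, and writing h⁻ = h_l − h_r, the condition h⁻(b₂)(b₁) = (b₁,b₂)²·α(h_l(b₁),h_l(b₂))·α(h_r(b₁),h_r(b₂))⁻¹ holds for all b₁,b₂ ∈ B, where h(b₁) denotes evaluation of the character b₁ ∈ Hom(H,K*) at h ∈ H. Define j_L(b) : Al(H,α) → Al(H,α) by Φ ↦ ψ(b)·(b,b)·e(h_l(b))·Φ·e(h_r(b))⁻¹ and b*(e(h)) = h(b)e(h). Then the map b ↦ j_L(b)⁻¹ ∘ b* is a group homomorphism from B to the group of K-linear automorphisms of Al(H,α). -/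
/-- Left multiplication by `e(h)` on formal functions `Af(H,α) = H → K`. -/
noncomputable def lmulE {K : Type*} [Field K] {H : Type*} [AddCommGroup H]
    (α : H → H → Kˣ) (h : H) (Φ : H → K) : H → K :=
  fun g => (α h (g - h) : K) * Φ (g - h)

/-- Right multiplication by `e(h)⁻¹ = α(h,h)e(-h)` on formal functions. -/
noncomputable def rmulEinv {K : Type*} [Field K] {H : Type*} [AddCommGroup H]
    (α : H → H → Kˣ) (h : H) (Φ : H → K) : H → K :=
  fun g => (α h h : K) * (α (g + h) (-h) : K) * Φ (g + h)

/-- The automorphy factor `j_L(b) : Φ ↦ c·e(hl)·Φ·e(hr)⁻¹` with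
`c = ψ(b)(b,b)`, acting on formal functions. -/
noncomputable def jfac {K : Type*} [Field K] {H : Type*} [AddCommGroup H]
    (α : H → H → Kˣ) (hl hr : H) (c : K) (Φ : H → K) : H → K :=
  fun g => c * lmulE α hl (rmulEinv α hr Φ) g

/-- The shift `b*` by a character, acting on formal functions. -/
noncomputable def bstarF {K : Type*} [Field K] {H : Type*}
    (χb : H → Kˣ) (Φ : H → K) : H → K :=
  fun h => (χb h : K) * Φ h

/-- The map `Φ ↦ j_L(b)⁻¹(b*(Φ))`. -/
noncomputable def thetaAct {K : Type*} [Field K] {H : Type*} [AddCommGroup H]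
    (α : H → H → Kˣ) (χb : H → Kˣ) (hlb hrb : H) (c : K) (Φ : H → K) : H → K :=
  Function.invFun (jfac α hlb hrb c) (bstarF χb Φ)

section Aux
variable {K : Type*} [Field K] {H : Type*} [AddCommGroup H]

noncomputable def ufac (α : H → H → Kˣ) (hl hr : H) (c : Kˣ) (g : H) : Kˣ :=
  c * α hl (g - hl) * α hr hr * α (g - hl + hr) (-hr)

lemma jfac_eq (α : H → H → Kˣ) (hl hr : H) (c : Kˣ) (Φ : H → K) (g : H) :
    jfac α hl hr (c : K) Φ g = (ufac α hl hr c g : K) * Φ (g - hl + hr) := by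
  simp only [jfac, lmulE, rmulEinv, ufac, Units.val_mul]
  ring

noncomputable def jinv (α : H → H → Kˣ) (hl hr : H) (c : Kˣ) (Ψ : H → K) : H → K :=
  fun t => ((ufac α hl hr c (t + hl - hr))⁻¹ : Kˣ) * Ψ (t + hl - hr)

lemma jfac_leftInv (α : H → H → Kˣ) (hl hr : H) (c : Kˣ) :
    Function.LeftInverse (jinv α hl hr c) (jfac α hl hr (c : K)) := by
  intro Φ; funext t
  have h1 : t + hl - hr - hl + hr = t := by abel
  simp only [jinv, jfac_eq, h1, Units.inv_mul_cancel_left]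

lemma jfac_rightInv (α : H → H → Kˣ) (hl hr : H) (c : Kˣ) :
    Function.RightInverse (jinv α hl hr c) (jfac α hl hr (c : K)) := by
  intro Ψ; funext g
  have h1 : g - hl + hr + hl - hr = g := by abel
  simp only [jinv, jfac_eq, h1, Units.mul_inv_cancel_left]

lemma jfac_bij (α : H → H → Kˣ) (hl hr : H) (c : Kˣ) :
    Function.Bijective (jfac α hl hr (c : K)) :=
  ⟨(jfac_leftInv α hl hr c).injective, (jfac_rightInv α hl hr c).surjective⟩

lemma thetaAct_eq (α : H → H → Kˣ) (χb : H → Kˣ) (hl hr : H) (c : Kˣ) (Φ : H → K) :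
    thetaAct α χb hl hr (c : K) Φ = jinv α hl hr c (bstarF χb Φ) := by
  unfold thetaAct
  conv_lhs => rw [← jfac_rightInv α hl hr c (bstarF χb Φ)]
  rw [Function.leftInverse_invFun (jfac_bij α hl hr c).injective]

end Aux


/-- for a theta multiplier `L = (h_l,h_r,ψ,(·,·))` satisfying
(2.12), each `j_L(b)` is an invertible K-linear map, and `b ↦ j_L(b)⁻¹ ∘ b*`
is a group homomorphism from `B` to K-linear automorphisms of `Af(H,α)`. -/
theorem stmt11 {K : Type*} [Field K] {H : Type*} [AddCommGroup H]
    [Module.Free ℤ H] [Module.Finite ℤ H]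
    {B : Type*} [AddCommGroup B]
    (α : H → H → Kˣ)
    (halt : ∀ h g, α h g * α g h = 1)
    (hbil₁ : ∀ h₁ h₂ g, α (h₁ + h₂) g = α h₁ g * α h₂ g)
    (hbil₂ : ∀ h g₁ g₂, α h (g₁ + g₂) = α h g₁ * α h g₂)
    -- the period group B ⊆ Hom(H,Kˣ): b acts as the character χ b
    (χ : B → H → Kˣ)
    (hχB : ∀ b b' h, χ (b + b') h = χ b h * χ b' h)
    (hχH : ∀ b h h', χ b (h + h') = χ b h * χ b h')
    -- the theta multiplier
    (hl hr : B →+ H)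
    (ψ : B → Kˣ) (hψ : ∀ b b', ψ (b + b') = ψ b * ψ b')
    (pair : B → B → Kˣ)
    (hpsym : ∀ b₁ b₂, pair b₁ b₂ = pair b₂ b₁)
    (hpbil : ∀ b₁ b₂ b, pair (b₁ + b₂) b = pair b₁ b * pair b₂ b)
    -- condition (2.12)
    (hcond : ∀ b₁ b₂ : B,
      χ b₁ (hl b₂ - hr b₂) =
        (pair b₁ b₂) ^ 2 * α (hl b₁) (hl b₂) * (α (hr b₁) (hr b₂))⁻¹) :
    (∀ b : B,
      Function.Bijective (jfac α (hl b) (hr b) ((ψ b : K) * (pair b b : K))) ∧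
      (∀ Φ Ψ : H → K,
        jfac α (hl b) (hr b) ((ψ b : K) * (pair b b : K)) (Φ + Ψ) =
          jfac α (hl b) (hr b) ((ψ b : K) * (pair b b : K)) Φ +
          jfac α (hl b) (hr b) ((ψ b : K) * (pair b b : K)) Ψ) ∧
      (∀ (c : K) (Φ : H → K),
        jfac α (hl b) (hr b) ((ψ b : K) * (pair b b : K)) (c • Φ) =
          c • jfac α (hl b) (hr b) ((ψ b : K) * (pair b b : K)) Φ)) ∧
    (∀ b₁ b₂ : B, ∀ Φ : H → K,
      thetaAct α (χ (b₁ + b₂)) (hl (b₁ + b₂)) (hr (b₁ + b₂))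
          ((ψ (b₁ + b₂) : K) * (pair (b₁ + b₂) (b₁ + b₂) : K)) Φ =
        thetaAct α (χ b₁) (hl b₁) (hr b₁) ((ψ b₁ : K) * (pair b₁ b₁ : K))
          (thetaAct α (χ b₂) (hl b₂) (hr b₂)
            ((ψ b₂ : K) * (pair b₂ b₂ : K)) Φ)) := by
  have hval : ∀ b : B, ((ψ b : K) * (pair b b : K)) = ((ψ b * pair b b : Kˣ) : K) :=
    fun b => (Units.val_mul _ _).symm
  constructor
  · intro b
    refine ⟨?_, ?_, ?_⟩
    · rw [hval]; exact jfac_bij α (hl b) (hr b) (ψ b * pair b b)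
    · intro Φ Ψ; funext g
      simp only [jfac, lmulE, rmulEinv, Pi.add_apply]
      ring
    · intro c Φ; funext g
      simp only [jfac, lmulE, rmulEinv, Pi.smul_apply, smul_eq_mul]
      ring
  · intro b₁ b₂ Φ
    rw [hval, hval, hval, thetaAct_eq, thetaAct_eq, thetaAct_eq]
    funext t
    simp only [jinv, bstarF]
    have harg : t + hl (b₁ + b₂) - hr (b₁ + b₂) = t + hl b₁ - hr b₁ + hl b₂ - hr b₂ := by
      rw [map_add, map_add]; abel
    rw [harg]
    set B1 : H := t + hl b₁ - hr b₁ with hB1def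
    set Cc : H := t + hl b₁ - hr b₁ + hl b₂ - hr b₂ with hCdef
    -- the key units identity
    have hu : ((ufac α (hl (b₁ + b₂)) (hr (b₁ + b₂)) (ψ (b₁ + b₂) * pair (b₁ + b₂) (b₁ + b₂)) Cc)⁻¹
          * χ (b₁ + b₂) Cc : Kˣ)
        = (ufac α (hl b₁) (hr b₁) (ψ b₁ * pair b₁ b₁) B1)⁻¹ * χ b₁ B1
          * ((ufac α (hl b₂) (hr b₂) (ψ b₂ * pair b₂ b₂) Cc)⁻¹ * χ b₂ Cc) := by
      -- bundle α and χ additively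
      let A : H →+ H →+ Additive Kˣ :=
        AddMonoidHom.mk' (fun h => AddMonoidHom.mk'
            (fun g => Additive.ofMul (α h g))
            (fun g₁ g₂ => congrArg Additive.ofMul (hbil₂ h g₁ g₂)))
          (fun h₁ h₂ => AddMonoidHom.ext fun g => congrArg Additive.ofMul (hbil₁ h₁ h₂ g))
      let X : B → H →+ Additive Kˣ := fun b =>
        AddMonoidHom.mk' (fun h => Additive.ofMul (χ b h))
          (fun h h' => congrArg Additive.ofMul (hχH b h h'))
      have hAdef : ∀ x y : H, Additive.ofMul (α x y) = A x y := fun _ _ => rfl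
      have hXdef : ∀ (b : B) (h : H), Additive.ofMul (χ b h) = X b h := fun _ _ => rfl
      have hAalt : ∀ x y : H, A y x = -A x y := fun x y =>
        eq_neg_of_add_eq_zero_left (congrArg Additive.ofMul (halt y x))
      have hXB : ∀ h : H, X (b₁ + b₂) h = X b₁ h + X b₂ h :=
        fun h => congrArg Additive.ofMul (hχB b₁ b₂ h)
      have hψA : Additive.ofMul (ψ (b₁ + b₂)) = Additive.ofMul (ψ b₁) + Additive.ofMul (ψ b₂) :=
        congrArg Additive.ofMul (hψ b₁ b₂)
      have hpmul : pair (b₁ + b₂) (b₁ + b₂)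
          = pair b₁ b₁ * pair b₁ b₂ * (pair b₁ b₂ * pair b₂ b₂) := by
        rw [hpbil, hpsym b₁ (b₁ + b₂), hpsym b₂ (b₁ + b₂), hpbil, hpbil, hpsym b₂ b₁]
      have hpairA : Additive.ofMul (pair (b₁ + b₂) (b₁ + b₂))
          = Additive.ofMul (pair b₁ b₁) + Additive.ofMul (pair b₁ b₂)
            + (Additive.ofMul (pair b₁ b₂) + Additive.ofMul (pair b₂ b₂)) :=
        congrArg Additive.ofMul hpmul
      have hcondA : X b₁ (hl b₂) - X b₁ (hr b₂)
          = Additive.ofMul (pair b₁ b₂) + Additive.ofMul (pair b₁ b₂)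
            + A (hl b₁) (hl b₂) - A (hr b₁) (hr b₂) := by
        have e := hcond b₁ b₂
        rw [pow_two] at e
        have e2 := congrArg Additive.ofMul e
        rw [hXdef, map_sub (X b₁)] at e2
        simpa only [ofMul_mul, ofMul_inv, hAdef, hXdef, sub_eq_add_neg, add_assoc] using e2
      have hcondA' : X b₁ (hl b₂)
          = X b₁ (hr b₂) + (Additive.ofMul (pair b₁ b₂) + Additive.ofMul (pair b₁ b₂)
            + A (hl b₁) (hl b₂) - A (hr b₁) (hr b₂)) := by
        rw [← hcondA]; abel
      apply Additive.ofMul.injective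
      show Additive.ofMul _ = Additive.ofMul _
      rw [hB1def, hCdef]
      simp only [ufac, ofMul_mul, ofMul_inv, hAdef, hXdef, hXB, hψA, hpairA, map_add, map_sub,
        map_neg, AddMonoidHom.add_apply, AddMonoidHom.sub_apply, AddMonoidHom.neg_apply,
        hcondA']
      simp only [hAalt (hl b₁) (hl b₂), hAalt (hl b₁) (hr b₁), hAalt (hl b₁) (hr b₂),
        hAalt (hl b₂) (hr b₁), hAalt (hl b₂) (hr b₂), hAalt (hr b₁) (hr b₂),
        hAalt t (hl b₁), hAalt t (hl b₂)]
      abel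
    have h2 : ((ufac α (hl (b₁ + b₂)) (hr (b₁ + b₂)) (ψ (b₁ + b₂) * pair (b₁ + b₂) (b₁ + b₂)) Cc)⁻¹
            * χ (b₁ + b₂) Cc : Kˣ) * Φ Cc
        = (((ufac α (hl b₁) (hr b₁) (ψ b₁ * pair b₁ b₁) B1)⁻¹ * χ b₁ B1
          * ((ufac α (hl b₂) (hr b₂) (ψ b₂ * pair b₂ b₂) Cc)⁻¹ * χ b₂ Cc) : Kˣ) : K) * Φ Cc := by
      rw [hu]
    simp only [Units.val_mul, Units.val_inv_eq_inv_val] at h2 ⊢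
    linear_combination h2
end

section
/- A formal series θ = Σ_{h∈H} a_h e(h) satisfies the theta functional equation b*(θ) = ψ(b)(b,b)e(h_l(b))·θ·e(h_r(b))⁻¹ for all b ∈ B if and only if its coefficients satisfy, for all h ∈ H and b ∈ B, the recursion a_{h+h⁻(b)} = a_h · ψ(b) · h(b)⁻¹ · (b,b)⁻¹ · α(h_l(b),h_l(b)) · α(h_r(b),h_l(b)) · α(h_l(b)+h_r(b), h), where h⁻(b) = h_l(b) − h_r(b). -/
/-!
Evaluating both sides of the functional equation for a single `b` at `h + h⁻(b)` gives
`χ_b(h) χ_b(h⁻(b)) θ(h + h⁻(b)) = ψ(b)(b,b) α(h_l+h_r, h) α(h_r,h_l) α(h_r,h_r) θ(h)`.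
The compatibility condition turns `χ_b(h⁻(b))` into `(b,b)² α(h_l,h_l) α(h_r,h_r)⁻¹`, and since
`α` is alternating, `α(g,g)² = 1`; dividing out gives the recursion. As `h ↦ h + h⁻(b)` is a
bijection of `H`, the equation at all points `h + h⁻(b)` is the whole functional equation.
-/

section Bimultiplicative

variable {K H : Type*} [Field K] [AddCommGroup H] {α : H → H → Kˣ}

theorem map_zero_right_of_bimul (hbil₂ : ∀ h g₁ g₂, α h (g₁ + g₂) = α h g₁ * α h g₂) (h : H) :
    α h 0 = 1 :=
  left_eq_mul.mp (by simpa only [add_zero] using hbil₂ h 0 0)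

theorem map_neg_right_of_bimul (hbil₂ : ∀ h g₁ g₂, α h (g₁ + g₂) = α h g₁ * α h g₂)
    (h g : H) : α h (-g) = (α h g)⁻¹ :=
  eq_inv_of_mul_eq_one_left <| by
    rw [← hbil₂, neg_add_cancel, map_zero_right_of_bimul hbil₂]

theorem jfac_apply_add_sub (halt : ∀ h g, α h g * α g h = 1)
    (hbil₁ : ∀ h₁ h₂ g, α (h₁ + h₂) g = α h₁ g * α h₂ g)
    (hbil₂ : ∀ h g₁ g₂, α h (g₁ + g₂) = α h g₁ * α h g₂) (l r : H) (c : K) (Φ : H → K) (h : H) :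
    jfac α l r c Φ (h + (l - r)) = c * (α (l + r) h * α r l * α r r : Kˣ) * Φ h := by
  have hshift : h + (l - r) - l = h + -r := by abel
  have hswap : ∀ g g' : H, (α g g')⁻¹ = α g' g := fun g g' =>
    (eq_inv_of_mul_eq_one_left (halt g' g)).symm
  simp only [jfac, lmulE, rmulEinv, hshift, neg_add_cancel_right, hbil₂,
    map_neg_right_of_bimul hbil₂, hswap, hbil₁]
  push_cast
  ring

end Bimultiplicative

theorem mul_eq_mul_iff_eq_mul_div {K : Type*} [Field K] {v w x y : K} (hv : v ≠ 0) :
    v * x = w * y ↔ x = y * (w / v) := by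
  rw [mul_comm v, ← eq_div_iff hv, mul_comm w y, mul_div_assoc]

section ThetaFunctionalEquation

variable {K H : Type*} [Field K] [AddCommGroup H] {α : H → H → Kˣ}
  (halt : ∀ h g, α h g * α g h = 1)
  (hbil₁ : ∀ h₁ h₂ g, α (h₁ + h₂) g = α h₁ g * α h₂ g)
  (hbil₂ : ∀ h g₁ g₂, α h (g₁ + g₂) = α h g₁ * α h g₂)
  {χb : H → Kˣ} (hχ : ∀ h h', χb (h + h') = χb h * χb h')
  {l r : H} {ψ p : Kˣ} (hcond : χb (l - r) = p ^ 2 * α l l * (α r r)⁻¹)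
include halt hbil₁ hbil₂ hχ hcond

theorem bstarF_eq_jfac_apply_add_sub_iff (θ : H → K) (h : H) :
    bstarF χb θ (h + (l - r)) = jfac α l r ((ψ : K) * (p : K)) θ (h + (l - r)) ↔
      θ (h + (l - r)) =
        θ h * (ψ : K) * ((χb h : K))⁻¹ * ((p : K))⁻¹ * (α l l : K) * (α r l : K) *
          (α (l + r) h : K) := by
  have hsq : ∀ g, (α g g : K) * α g g = 1 := fun g => by
    rw [← Units.val_mul, halt, Units.val_one]
  have hfactor : θ h * (((ψ : K) * p * (α (l + r) h * α r l * α r r : Kˣ)) /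
      ((χb h * (p ^ 2 * α l l * (α r r)⁻¹) : Kˣ) : K)) =
        θ h * ψ * (χb h : K)⁻¹ * (p : K)⁻¹ * α l l * α r l * α (l + r) h := by
    push_cast
    field_simp
    linear_combination θ h * (hsq r - hsq l)
  rw [bstarF, hχ, hcond, jfac_apply_add_sub halt hbil₁ hbil₂,
    mul_eq_mul_iff_eq_mul_div (Units.ne_zero _), hfactor]

theorem bstarF_eq_jfac_iff (θ : H → K) :
    bstarF χb θ = jfac α l r ((ψ : K) * (p : K)) θ ↔
      ∀ h : H, θ (h + (l - r)) =
        θ h * (ψ : K) * ((χb h : K))⁻¹ * ((p : K))⁻¹ * (α l l : K) * (α r l : K) *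
          (α (l + r) h : K) := by
  rw [funext_iff, ← (Equiv.addRight (l - r)).forall_congr_right]
  exact forall_congr' (bstarF_eq_jfac_apply_add_sub_iff halt hbil₁ hbil₂ hχ hcond θ)

end ThetaFunctionalEquation

theorem stmt14_general {K : Type*} [Field K] {H : Type*} [AddCommGroup H]
    {B : Type*} [AddCommGroup B]
    (α : H → H → Kˣ)
    (halt : ∀ h g, α h g * α g h = 1)
    (hbil₁ : ∀ h₁ h₂ g, α (h₁ + h₂) g = α h₁ g * α h₂ g)
    (hbil₂ : ∀ h g₁ g₂, α h (g₁ + g₂) = α h g₁ * α h g₂)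
    (χ : B → H → Kˣ)
    (hχH : ∀ b h h', χ b (h + h') = χ b h * χ b h')
    (hl hr : B →+ H)
    (ψ : B → Kˣ)
    (pair : B → B → Kˣ)
    (hcond : ∀ b₁ b₂ : B,
      χ b₁ (hl b₂ - hr b₂) =
        (pair b₁ b₂) ^ 2 * α (hl b₁) (hl b₂) * (α (hr b₁) (hr b₂))⁻¹)
    (θ : H → K) :
    (∀ b : B,
      bstarF (χ b) θ = jfac α (hl b) (hr b) ((ψ b : K) * (pair b b : K)) θ) ↔
    (∀ (h : H) (b : B),
      θ (h + (hl b - hr b)) =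
        θ h * (ψ b : K) * ((χ b h : K))⁻¹ * ((pair b b : K))⁻¹ *
          (α (hl b) (hl b) : K) * (α (hr b) (hl b) : K) *
          (α (hl b + hr b) h : K)) :=
  (forall_congr' fun b =>
    bstarF_eq_jfac_iff halt hbil₁ hbil₂ (hχH b) (hcond b b) θ).trans forall_comm

/-- a formal series `θ = Σ a_h e(h)` satisfies the theta
functional equation `b*(θ) = ψ(b)(b,b)e(h_l(b))·θ·e(h_r(b))⁻¹` for all `b ∈ B`
iff its coefficients satisfy, for all `h ∈ H`, `b ∈ B`, the recursion (2.21):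
`a_{h+h⁻(b)} = a_h·ψ(b)·h(b)⁻¹·(b,b)⁻¹·α(h_l(b),h_l(b))·α(h_r(b),h_l(b))·α(h_l(b)+h_r(b),h)`. -/
theorem stmt14 {K : Type*} [Field K] {H : Type*} [AddCommGroup H]
    [Module.Free ℤ H] [Module.Finite ℤ H]
    {B : Type*} [AddCommGroup B]
    (α : H → H → Kˣ)
    (halt : ∀ h g, α h g * α g h = 1)
    (hbil₁ : ∀ h₁ h₂ g, α (h₁ + h₂) g = α h₁ g * α h₂ g)
    (hbil₂ : ∀ h g₁ g₂, α h (g₁ + g₂) = α h g₁ * α h g₂)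
    (χ : B → H → Kˣ)
    (hχB : ∀ b b' h, χ (b + b') h = χ b h * χ b' h)
    (hχH : ∀ b h h', χ b (h + h') = χ b h * χ b h')
    (hl hr : B →+ H)
    (ψ : B → Kˣ) (hψ : ∀ b b', ψ (b + b') = ψ b * ψ b')
    (pair : B → B → Kˣ)
    (hpsym : ∀ b₁ b₂, pair b₁ b₂ = pair b₂ b₁)
    (hpbil : ∀ b₁ b₂ b, pair (b₁ + b₂) b = pair b₁ b * pair b₂ b)
    (hcond : ∀ b₁ b₂ : B,
      χ b₁ (hl b₂ - hr b₂) =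
        (pair b₁ b₂) ^ 2 * α (hl b₁) (hl b₂) * (α (hr b₁) (hr b₂))⁻¹)
    (θ : H → K) :
    (∀ b : B,
      bstarF (χ b) θ = jfac α (hl b) (hr b) ((ψ b : K) * (pair b b : K)) θ) ↔
    (∀ (h : H) (b : B),
      θ (h + (hl b - hr b)) =
        θ h * (ψ b : K) * ((χ b h : K))⁻¹ * ((pair b b : K))⁻¹ *
          (α (hl b) (hl b) : K) * (α (hr b) (hl b) : K) *
          (α (hl b + hr b) h : K)) :=
  stmt14_general α halt hbil₁ hbil₂ χ hχH hl hr ψ pair hcond θ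
end

section
/- Let L₁ = (h_l⁽¹⁾, h_r⁽¹⁾, ψ₁, (·,·)₁) and L₂ = (h_l⁽²⁾, h_r⁽²⁾, ψ₂, (·,·)₂) be theta multipliers for (H, α, B) that are composable, i.e. h_l⁽²⁾ = h_r⁽¹⁾. Then L := (h_l⁽¹⁾, h_r⁽²⁾, ψ₁ψ₂, (·,·)₁(·,·)₂) also satisfies the theta-multiplier condition (2.12), i.e. is a theta multiplier for (H, α, B). -/
/-- if theta multipliers `L₁ = (h_l⁽¹⁾,h_r⁽¹⁾,ψ₁,(·,·)₁)` and
`L₂ = (h_l⁽²⁾,h_r⁽²⁾,ψ₂,(·,·)₂)` for `(H,α,B)` are composable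
(`h_l⁽²⁾ = h_r⁽¹⁾`), then `L = (h_l⁽¹⁾, h_r⁽²⁾, ψ₁ψ₂, (·,·)₁(·,·)₂)` again
satisfies the theta-multiplier condition (2.12). -/
theorem stmt16 {K : Type*} [Field K] {H : Type*} [AddCommGroup H]
    {B : Type*} [AddCommGroup B]
    (α : H → H → Kˣ)
    (halt : ∀ h g, α h g * α g h = 1)
    (hbil₁ : ∀ h₁ h₂ g, α (h₁ + h₂) g = α h₁ g * α h₂ g)
    (hbil₂ : ∀ h g₁ g₂, α h (g₁ + g₂) = α h g₁ * α h g₂)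
    (χ : B → H → Kˣ)
    (hχB : ∀ b b' h, χ (b + b') h = χ b h * χ b' h)
    (hχH : ∀ b h h', χ b (h + h') = χ b h * χ b h')
    -- multiplier L₁
    (hl₁ hr₁ : B →+ H)
    (ψ₁ : B → Kˣ) (hψ₁ : ∀ b b', ψ₁ (b + b') = ψ₁ b * ψ₁ b')
    (pair₁ : B → B → Kˣ)
    (hpsym₁ : ∀ b₁ b₂, pair₁ b₁ b₂ = pair₁ b₂ b₁)
    (hpbil₁ : ∀ b₁ b₂ b, pair₁ (b₁ + b₂) b = pair₁ b₁ b * pair₁ b₂ b)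
    (hcond₁ : ∀ b₁ b₂ : B,
      χ b₁ (hl₁ b₂ - hr₁ b₂) =
        (pair₁ b₁ b₂) ^ 2 * α (hl₁ b₁) (hl₁ b₂) * (α (hr₁ b₁) (hr₁ b₂))⁻¹)
    -- multiplier L₂
    (hl₂ hr₂ : B →+ H)
    (ψ₂ : B → Kˣ) (hψ₂ : ∀ b b', ψ₂ (b + b') = ψ₂ b * ψ₂ b')
    (pair₂ : B → B → Kˣ)
    (hpsym₂ : ∀ b₁ b₂, pair₂ b₁ b₂ = pair₂ b₂ b₁)
    (hpbil₂ : ∀ b₁ b₂ b, pair₂ (b₁ + b₂) b = pair₂ b₁ b * pair₂ b₂ b)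
    (hcond₂ : ∀ b₁ b₂ : B,
      χ b₁ (hl₂ b₂ - hr₂ b₂) =
        (pair₂ b₁ b₂) ^ 2 * α (hl₂ b₁) (hl₂ b₂) * (α (hr₂ b₁) (hr₂ b₂))⁻¹)
    -- composability
    (hcomp : hl₂ = hr₁) :
    ∀ b₁ b₂ : B,
      χ b₁ (hl₁ b₂ - hr₂ b₂) =
        (pair₁ b₁ b₂ * pair₂ b₁ b₂) ^ 2 * α (hl₁ b₁) (hl₁ b₂) *
          (α (hr₂ b₁) (hr₂ b₂))⁻¹ := by
  intro b₁ b₂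
  have key : hl₁ b₂ - hr₂ b₂ = (hl₁ b₂ - hr₁ b₂) + (hl₂ b₂ - hr₂ b₂) := by
    rw [hcomp]; abel
  rw [key, hχH, hcond₁, hcond₂, hcomp, mul_pow]
  rw [Units.ext_iff]
  push_cast
  field_simp
end

section
/- Let f : H₁ → H₂ be a group homomorphism with α₂(f(h),f(g)) = α₁(h,g) for all h,g ∈ H₁, inducing F : Hom(H₂,K*) → Hom(H₁,K*) by F(b) = b ∘ f, with F(B₂) ⊆ B₁. Let L₁ = (h_l,h_r,ψ,(·,·)) be a theta multiplier for (H₁,α₁,B₁), and let (a_h)_{h∈H₁} in K* satisfy a_{h+g} = a_h a_g. Define, for b, b₁, b₂ ∈ B₂: h'_{l,r}(b) = f(h_{l,r}(F(b))), ψ'(b) = ψ(F(b))·a_{h⁻(F(b))}, and (b₁,b₂)' = (F(b₁),F(b₂)). Then (h'_l, h'_r, ψ', (·,·)') satisfies the theta-multiplier condition for (H₂,α₂,B₂). -/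
/-- pullback of a theta multiplier along a characteristic-one
morphism `f : H₁ → H₂` (with `α₂(f h, f g) = α₁(h,g)`), using a multiplicative
family `(a_h)` in `Kˣ`: the data
`h'_{l,r}(b) = f(h_{l,r}(F(b)))`, `ψ'(b) = ψ(F(b))·a_{h⁻(F(b))}`,
`(b₁,b₂)' = (F(b₁),F(b₂))` again satisfies the theta-multiplier condition
(2.12) for `(H₂,α₂,B₂)`. -/
theorem stmt17 {K : Type*} [Field K] {H₁ H₂ : Type*} [AddCommGroup H₁] [AddCommGroup H₂]
    {B₁ B₂ : Type*} [AddCommGroup B₁] [AddCommGroup B₂]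
    (α₁ : H₁ → H₁ → Kˣ) (α₂ : H₂ → H₂ → Kˣ)
    (halt₁ : ∀ h g, α₁ h g * α₁ g h = 1)
    (hbil₁ : ∀ h h' g, α₁ (h + h') g = α₁ h g * α₁ h' g)
    (halt₂ : ∀ h g, α₂ h g * α₂ g h = 1)
    (hbil₂ : ∀ h h' g, α₂ (h + h') g = α₂ h g * α₂ h' g)
    -- the character pairings of the period groups B₁ ⊆ Hom(H₁,Kˣ), B₂ ⊆ Hom(H₂,Kˣ)
    (χ₁ : B₁ → H₁ → Kˣ)
    (hχ₁B : ∀ b b' h, χ₁ (b + b') h = χ₁ b h * χ₁ b' h)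
    (hχ₁H : ∀ b h h', χ₁ b (h + h') = χ₁ b h * χ₁ b h')
    (χ₂ : B₂ → H₂ → Kˣ)
    (hχ₂B : ∀ b b' h, χ₂ (b + b') h = χ₂ b h * χ₂ b' h)
    (hχ₂H : ∀ b h h', χ₂ b (h + h') = χ₂ b h * χ₂ b h')
    -- f, of characteristic 1
    (f : H₁ →+ H₂)
    (hf : ∀ h g : H₁, α₂ (f h) (f g) = α₁ h g)
    -- the induced map F : B₂ → B₁, F(b) = b ∘ f
    (F : B₂ →+ B₁)
    (hF : ∀ (b : B₂) (h : H₁), χ₁ (F b) h = χ₂ b (f h))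
    -- a multiplicative family (a_h)
    (a : H₁ → Kˣ) (ha : ∀ h g, a (h + g) = a h * a g)
    -- a theta multiplier L₁ for (H₁,α₁,B₁)
    (hl hr : B₁ →+ H₁)
    (ψ : B₁ → Kˣ) (hψ : ∀ b b', ψ (b + b') = ψ b * ψ b')
    (pair : B₁ → B₁ → Kˣ)
    (hpsym : ∀ b₁ b₂, pair b₁ b₂ = pair b₂ b₁)
    (hpbil : ∀ b₁ b₂ b, pair (b₁ + b₂) b = pair b₁ b * pair b₂ b)
    (hcond : ∀ b₁ b₂ : B₁,
      χ₁ b₁ (hl b₂ - hr b₂) =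
        (pair b₁ b₂) ^ 2 * α₁ (hl b₁) (hl b₂) * (α₁ (hr b₁) (hr b₂))⁻¹) :
    -- the pullback data is again a theta multiplier for (H₂,α₂,B₂):
    -- ψ' is a homomorphism, (·,·)' is symmetric bimultiplicative, and (2.12) holds
    (∀ b b' : B₂,
      ψ (F (b + b')) * a (hl (F (b + b')) - hr (F (b + b'))) =
        (ψ (F b) * a (hl (F b) - hr (F b))) *
        (ψ (F b') * a (hl (F b') - hr (F b')))) ∧
    (∀ b₁ b₂ : B₂, pair (F b₁) (F b₂) = pair (F b₂) (F b₁)) ∧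
    (∀ b₁ b₂ b : B₂,
      pair (F (b₁ + b₂)) (F b) = pair (F b₁) (F b) * pair (F b₂) (F b)) ∧
    (∀ b₁ b₂ : B₂,
      χ₂ b₁ (f (hl (F b₂)) - f (hr (F b₂))) =
        (pair (F b₁) (F b₂)) ^ 2 * α₂ (f (hl (F b₁))) (f (hl (F b₂))) *
          (α₂ (f (hr (F b₁))) (f (hr (F b₂))))⁻¹) := by
  refine ⟨?_, fun b₁ b₂ => hpsym _ _, fun b₁ b₂ b => by rw [map_add, hpbil], ?_⟩
  · intro b b'
    have h1 : F (b + b') = F b + F b' := map_add F b b'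
    rw [h1, hψ, map_add, map_add]
    have : hl (F b) + hl (F b') - (hr (F b) + hr (F b'))
        = (hl (F b) - hr (F b)) + (hl (F b') - hr (F b')) := by abel
    rw [this, ha, mul_mul_mul_comm]
  · intro b₁ b₂
    rw [hf, hf, ← map_sub f, ← hF, hcond]
end

section
/- Under the hypotheses of the pullback construction (characteristic-one morphism f with α₂(f(h),f(g)) = α₁(h,g), multiplicative family a_{h+g} = a_h a_g, F(B₂) ⊆ B₁), the induced map F* on formal functions, F*(Σ_{h∈H₁} c_h e(h)) = Σ_{g∈H₂} (Σ_{h∈f⁻¹(g)} c_h a_h) e(g) (assuming the fibers f⁻¹(g) meet the support of the series in finitely many points, e.g. f injective), maps theta functions with multiplier L₁ to theta functions with multiplier F*(L₁): F*(Γ(L₁)) ⊆ Γ(F*(L₁)). -/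
-- The pullback `F*` on formal functions (for injective `f`):
-- `F*(Σ c_h e(h)) = Σ_h c_h·a_h·e(f(h))`.
open scoped Classical in
noncomputable def Fstar {K : Type*} [Field K] {H₁ H₂ : Type*}
    (f : H₁ → H₂) (a : H₁ → Kˣ) (c : H₁ → K) : H₂ → K :=
  fun g => if hg : ∃ h, f h = g then c hg.choose * (a hg.choose : K) else 0

open scoped Classical in
lemma Fstar_apply {K : Type*} [Field K] {H₁ H₂ : Type*}
    {f : H₁ → H₂} (hfinj : Function.Injective f) (a : H₁ → Kˣ) (c : H₁ → K) (h : H₁) :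
    Fstar f a c (f h) = c h * (a h : K) := by
  have hg : ∃ h', f h' = f h := ⟨h, rfl⟩
  simp only [Fstar, dif_pos hg, hfinj hg.choose_spec]

open scoped Classical in
lemma Fstar_apply_of_not {K : Type*} [Field K] {H₁ H₂ : Type*}
    {f : H₁ → H₂} (a : H₁ → Kˣ) (c : H₁ → K) {g : H₂} (hg : ¬ ∃ h, f h = g) :
    Fstar f a c g = 0 := by
  simp only [Fstar, dif_neg hg]

/-- for a characteristic-one morphism `f` (injective), a
multiplicative family `(a_h)`, and `F(B₂) ⊆ B₁`, the induced map `F*` on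
formal functions maps theta functions with multiplier `L₁` to theta functions
with the pullback multiplier `F*(L₁)`: `F*(Γ(L₁)) ⊆ Γ(F*(L₁))`. -/
theorem stmt18 {K : Type*} [Field K] {H₁ H₂ : Type*} [AddCommGroup H₁] [AddCommGroup H₂]
    [Module.Free ℤ H₁] [Module.Finite ℤ H₁]
    [Module.Free ℤ H₂] [Module.Finite ℤ H₂]
    {B₁ B₂ : Type*} [AddCommGroup B₁] [AddCommGroup B₂]
    (α₁ : H₁ → H₁ → Kˣ) (α₂ : H₂ → H₂ → Kˣ)
    (halt₁ : ∀ h g, α₁ h g * α₁ g h = 1)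
    (hbil₁ : ∀ h h' g, α₁ (h + h') g = α₁ h g * α₁ h' g)
    (halt₂ : ∀ h g, α₂ h g * α₂ g h = 1)
    (hbil₂ : ∀ h h' g, α₂ (h + h') g = α₂ h g * α₂ h' g)
    (χ₁ : B₁ → H₁ → Kˣ)
    (hχ₁B : ∀ b b' h, χ₁ (b + b') h = χ₁ b h * χ₁ b' h)
    (hχ₁H : ∀ b h h', χ₁ b (h + h') = χ₁ b h * χ₁ b h')
    (χ₂ : B₂ → H₂ → Kˣ)
    (hχ₂B : ∀ b b' h, χ₂ (b + b') h = χ₂ b h * χ₂ b' h)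
    (hχ₂H : ∀ b h h', χ₂ b (h + h') = χ₂ b h * χ₂ b h')
    (f : H₁ →+ H₂) (hfinj : Function.Injective f)
    (hf : ∀ h g : H₁, α₂ (f h) (f g) = α₁ h g)
    (F : B₂ →+ B₁)
    (hF : ∀ (b : B₂) (h : H₁), χ₁ (F b) h = χ₂ b (f h))
    (a : H₁ → Kˣ) (ha : ∀ h g, a (h + g) = a h * a g)
    (hl hr : B₁ →+ H₁)
    (ψ : B₁ → Kˣ) (hψ : ∀ b b', ψ (b + b') = ψ b * ψ b')
    (pair : B₁ → B₁ → Kˣ)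
    (hpsym : ∀ b₁ b₂, pair b₁ b₂ = pair b₂ b₁)
    (hpbil : ∀ b₁ b₂ b, pair (b₁ + b₂) b = pair b₁ b * pair b₂ b)
    (hcond : ∀ b₁ b₂ : B₁,
      χ₁ b₁ (hl b₂ - hr b₂) =
        (pair b₁ b₂) ^ 2 * α₁ (hl b₁) (hl b₂) * (α₁ (hr b₁) (hr b₂))⁻¹)
    -- θ is a theta function with multiplier L₁
    (θ : H₁ → K)
    (hθ : ∀ b : B₁,
      bstarF (χ₁ b) θ = jfac α₁ (hl b) (hr b) ((ψ b : K) * (pair b b : K)) θ) :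
    -- F*(θ) is a theta function with the pullback multiplier F*(L₁)
    ∀ b : B₂,
      bstarF (χ₂ b) (Fstar (⇑f) a θ) =
        jfac α₂ (f (hl (F b))) (f (hr (F b)))
          (((ψ (F b) : K) * (a (hl (F b) - hr (F b)) : K)) *
            (pair (F b) (F b) : K))
          (Fstar (⇑f) a θ) := by
  intro b
  set b' := F b with hb'
  funext g
  by_cases hg : ∃ h, (f : H₁ → H₂) h = g
  · obtain ⟨h, rfl⟩ := hg
    simp only [bstarF, jfac, lmulE, rmulEinv]
    rw [← map_sub f, ← map_neg f, ← map_add f,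
      Fstar_apply hfinj, Fstar_apply hfinj, hf, hf, hf, ← hF]
    have key := congrFun (hθ b') h
    simp only [bstarF, jfac, lmulE, rmulEinv] at key
    have haa : (a (hl b' - hr b') : K) * (a (h - hl b' + hr b') : K) = (a h : K) := by
      have h1 := ha (hl b' - hr b') (h - hl b' + hr b')
      have h2 : hl b' - hr b' + (h - hl b' + hr b') = h := by abel
      rw [h2] at h1
      exact_mod_cast h1.symm
    linear_combination (a h : K) * key -
      ((ψ b' : K) * (pair b' b' : K) * (α₁ (hl b') (h - hl b') : K) *
        ((α₁ (hr b') (hr b') : K) * (α₁ (h - hl b' + hr b') (-hr b') : K)) *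
        θ (h - hl b' + hr b')) * haa
  · have hg2 : ¬ ∃ h, (f : H₁ → H₂) h = g - f (hl b') + f (hr b') := by
      rintro ⟨h, hh⟩
      exact hg ⟨h + hl b' - hr b', by rw [map_sub, map_add, hh]; abel⟩
    simp only [bstarF, jfac, lmulE, rmulEinv,
      Fstar_apply_of_not a θ hg, Fstar_apply_of_not a θ hg2, mul_zero, zero_mul]
end
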